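/- arXiv:1905.10683 — 2 statements merged into one kernel-verified Lean document; each statement's English description precedes it below -/
import Mathlib

section
/- (Proposition on symmetry of global directed closure coefficients.) In any finite simple directed graph G: if Σ_{u∈V} W_ii(u) > 0 then H_ii^i = H_oo^o and H_ii^o = H_oo^i; if Σ_{u∈V} W_io(u) > 0 then H_io^i = H_io^o; and if Σ_{u∈V} W_oi(u) > 0 then H_oi^i = H_oi^o. -/
/-!
Reading a wedge `(u, v, w)` backwards as `(w, v, u)` is a bijection on all wedges of the graph.
It turns an `xy`-wedge with head `u` into a `ȳx̄`-wedge with head `w` (bar flipping `i` and `o`),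
and the closing edge between `u` and `w`, of direction `z` relative to `u`, has direction `z̄`
relative to the new head `w`. Hence `Σ W_xy = Σ W_ȳx̄` and `Σ W_xy^z = Σ W_ȳx̄^z̄`: for
`xy = ii` this pairs `ii` with `oo`, while `io` and `oi` are fixed with `z` flipped.
-/

open Finset

/-- Direction-indexed edge predicate relative to a base node `a`: for direction `x`,
`dirE E x a b` holds if there is an edge between `a` and `b` of direction `x` with respect
to `a`; `x = false` stands for `i` (incoming, i.e. the edge `(b, a)`) and `x = true` stands
for `o` (outgoing, i.e. the edge `(a, b)`). -/
def dirE {V : Type*} (E : V → V → Prop) (x : Bool) (a b : V) : Prop :=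
  if x then E a b else E b a

instance {V : Type*} (E : V → V → Prop) [DecidableRel E] (x : Bool) :
    DecidableRel (dirE E x) := fun a b => by
  unfold dirE; infer_instance

/-- `wedgeCount E x y u`: the number of xy-type directed wedges `(u, v, w)` with head `u`:
`u, v, w` pairwise distinct, the first edge has direction `x` with respect to the head `u`,
and the second edge has direction `y` with respect to the center `v`
(`false` = i, `true` = o).  The pair `p` encodes `(v, w) = (center, tail)`. -/
def wedgeCount {V : Type*} [Fintype V] [DecidableEq V] (E : V → V → Prop) [DecidableRel E]
    (x y : Bool) (u : V) : ℕ :=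
  (Finset.univ.filter fun p : V × V =>
    u ≠ p.1 ∧ u ≠ p.2 ∧ p.1 ≠ p.2 ∧ dirE E x u p.1 ∧ dirE E y p.1 p.2).card

/-- `closedWedgeCount E x y z u`: the number of z-closed xy-type wedges with head `u`, i.e.
those xy-type wedges `(u, v, w)` that also have a closing edge of direction `z` with respect
to the head `u` (`z = false`: the edge `(w, u)`; `z = true`: the edge `(u, w)`). -/
def closedWedgeCount {V : Type*} [Fintype V] [DecidableEq V] (E : V → V → Prop) [DecidableRel E]
    (x y z : Bool) (u : V) : ℕ :=
  (Finset.univ.filter fun p : V × V =>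
    u ≠ p.1 ∧ u ≠ p.2 ∧ p.1 ≠ p.2 ∧ dirE E x u p.1 ∧ dirE E y p.1 p.2 ∧ dirE E z u p.2).card

theorem dirE_not {V : Type*} (E : V → V → Prop) (x : Bool) (a b : V) :
    dirE E (!x) a b ↔ dirE E x b a := by
  cases x <;> rfl

section Reversal

variable {V : Type*} [Fintype V]

theorem sum_card_filter_eq_card_filter_prod (Q : V → V × V → Prop)
    [∀ u, DecidablePred (Q u)] :
    ∑ u : V, #{p | Q u p} = #{t : V × V × V | Q t.1 t.2} := by
  simp only [card_filter, Fintype.sum_prod_type]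

theorem card_filter_reverse (P : V × V × V → Prop) [DecidablePred P] :
    #{t | P t} = #{t : V × V × V | P (t.2.2, t.2.1, t.1)} := by
  apply card_nbij' (fun t => (t.2.2, t.2.1, t.1)) (fun t => (t.2.2, t.2.1, t.1)) <;>
    simp [Set.MapsTo, Set.LeftInvOn]

variable [DecidableEq V] (E : V → V → Prop) [DecidableRel E]

theorem sum_wedgeCount_eq_sum_wedgeCount_not (x y : Bool) :
    ∑ u, wedgeCount E x y u = ∑ u, wedgeCount E (!y) (!x) u := by
  simp only [wedgeCount, sum_card_filter_eq_card_filter_prod]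
  rw [card_filter_reverse]
  congr 1; ext ⟨u, v, w⟩
  simp only [mem_filter, mem_univ, true_and, dirE_not]
  constructor <;> rintro ⟨huv, huw, hvw, hx, hy⟩ <;> exact ⟨hvw.symm, huw.symm, huv.symm, hy, hx⟩

theorem sum_closedWedgeCount_eq_sum_closedWedgeCount_not (x y z : Bool) :
    ∑ u, closedWedgeCount E x y z u = ∑ u, closedWedgeCount E (!y) (!x) (!z) u := by
  simp only [closedWedgeCount, sum_card_filter_eq_card_filter_prod]
  rw [card_filter_reverse]
  congr 1; ext ⟨u, v, w⟩
  simp only [mem_filter, mem_univ, true_and, dirE_not]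
  constructor <;> rintro ⟨huv, huw, hvw, hx, hy, hz⟩ <;>
    exact ⟨hvw.symm, huw.symm, huv.symm, hy, hx, hz⟩

end Reversal

theorem global_closure_coefficient_symmetry_general {V : Type*} [Fintype V] [DecidableEq V]
    (E : V → V → Prop) [DecidableRel E] :
    (0 < ∑ u : V, wedgeCount E false false u →
      ((∑ u : V, closedWedgeCount E false false false u : ℚ) /
          (∑ u : V, wedgeCount E false false u) =
        (∑ u : V, closedWedgeCount E true true true u : ℚ) /
          (∑ u : V, wedgeCount E true true u) ∧
       (∑ u : V, closedWedgeCount E false false true u : ℚ) /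
          (∑ u : V, wedgeCount E false false u) =
        (∑ u : V, closedWedgeCount E true true false u : ℚ) /
          (∑ u : V, wedgeCount E true true u))) ∧
    (0 < ∑ u : V, wedgeCount E false true u →
      (∑ u : V, closedWedgeCount E false true false u : ℚ) /
          (∑ u : V, wedgeCount E false true u) =
        (∑ u : V, closedWedgeCount E false true true u : ℚ) /
          (∑ u : V, wedgeCount E false true u)) ∧
    (0 < ∑ u : V, wedgeCount E true false u →
      (∑ u : V, closedWedgeCount E true false false u : ℚ) /
          (∑ u : V, wedgeCount E true false u) =
        (∑ u : V, closedWedgeCount E true false true u : ℚ) /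
          (∑ u : V, wedgeCount E true false u)) := by
  have hw := sum_wedgeCount_eq_sum_wedgeCount_not E false false
  have hc := sum_closedWedgeCount_eq_sum_closedWedgeCount_not E
  simp only [← Nat.cast_sum, hw, hc false false false, hc false false true, hc false true false,
    hc true false false, Bool.not_false, Bool.not_true, and_self, implies_true]

/-- Symmetry of the global directed closure coefficients
`H_xy^z = (Σ_u W_xy^z(u)) / (Σ_u W_xy(u))`:
whenever defined, `H_ii^i = H_oo^o`, `H_ii^o = H_oo^i`, `H_io^i = H_io^o`, `H_oi^i = H_oi^o`. -/
theorem global_closure_coefficient_symmetry {V : Type*} [Fintype V] [DecidableEq V]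
    (E : V → V → Prop) [DecidableRel E] (hirr : ∀ v, ¬ E v v) :
    (0 < ∑ u : V, wedgeCount E false false u →
      ((∑ u : V, closedWedgeCount E false false false u : ℚ) /
          (∑ u : V, wedgeCount E false false u) =
        (∑ u : V, closedWedgeCount E true true true u : ℚ) /
          (∑ u : V, wedgeCount E true true u) ∧
       (∑ u : V, closedWedgeCount E false false true u : ℚ) /
          (∑ u : V, wedgeCount E false false u) =
        (∑ u : V, closedWedgeCount E true true false u : ℚ) /
          (∑ u : V, wedgeCount E true true u))) ∧
    (0 < ∑ u : V, wedgeCount E false true u →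
      (∑ u : V, closedWedgeCount E false true false u : ℚ) /
          (∑ u : V, wedgeCount E false true u) =
        (∑ u : V, closedWedgeCount E false true true u : ℚ) /
          (∑ u : V, wedgeCount E false true u)) ∧
    (0 < ∑ u : V, wedgeCount E true false u →
      (∑ u : V, closedWedgeCount E true false false u : ℚ) /
          (∑ u : V, wedgeCount E true false u) =
        (∑ u : V, closedWedgeCount E true false true u : ℚ) /
          (∑ u : V, wedgeCount E true false u)) :=
  global_closure_coefficient_symmetry_general E
end

section
/- Let G be a finite simple directed graph with no reciprocated edges (i.e., (a,b) ∈ E implies (b,a) ∉ E) and with Σ_{v∈V} d_in(v)·d_out(v) > 0. Then the global directed closure coefficients of type ii satisfy H_ii^i = T / (Σ_{v∈V} d_in(v)·d_out(v)) and H_ii^o = C₃ / (Σ_{v∈V} d_in(v)·d_out(v)), where T = |{(a,b,c) ∈ V³ : a,b,c pairwise distinct, (a,b) ∈ E, (b,c) ∈ E, (a,c) ∈ E}| is the number of transitive triads and C₃ = |{(a,b,c) ∈ V³ : a,b,c pairwise distinct, (a,b) ∈ E, (b,c) ∈ E, (c,a) ∈ E}| is the number of cyclically ordered directed 3-cycles.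 -/
open Finset

/-- The in-degree of a node `v`: the number of nodes `w` with an edge `(w, v)`. -/
def inDeg {V : Type*} [Fintype V] (E : V → V → Prop) [DecidableRel E] (v : V) : ℕ :=
  (Finset.univ.filter fun w => E w v).card

/-- The out-degree of a node `v`: the number of nodes `w` with an edge `(v, w)`. -/
def outDeg {V : Type*} [Fintype V] (E : V → V → Prop) [DecidableRel E] (v : V) : ℕ :=
  (Finset.univ.filter fun w => E v w).card

/-- `wedgeII E u`: the number of ii-type wedges `(u, v, w)` with head `u`:
edges `(v, u)` and `(w, v)`, with `u, v, w` pairwise distinct.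
The pair `p` encodes `(v, w) = (center, tail)`. -/
def wedgeII {V : Type*} [Fintype V] [DecidableEq V] (E : V → V → Prop) [DecidableRel E]
    (u : V) : ℕ :=
  (Finset.univ.filter fun p : V × V =>
    u ≠ p.1 ∧ u ≠ p.2 ∧ p.1 ≠ p.2 ∧ E p.1 u ∧ E p.2 p.1).card

/-- `wedgeIIi E u`: the number of i-closed ii-type wedges with head `u`
(closing edge `(w, u)`). -/
def wedgeIIi {V : Type*} [Fintype V] [DecidableEq V] (E : V → V → Prop) [DecidableRel E]
    (u : V) : ℕ :=
  (Finset.univ.filter fun p : V × V =>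
    u ≠ p.1 ∧ u ≠ p.2 ∧ p.1 ≠ p.2 ∧ E p.1 u ∧ E p.2 p.1 ∧ E p.2 u).card

/-- `wedgeIIo E u`: the number of o-closed ii-type wedges with head `u`
(closing edge `(u, w)`). -/
def wedgeIIo {V : Type*} [Fintype V] [DecidableEq V] (E : V → V → Prop) [DecidableRel E]
    (u : V) : ℕ :=
  (Finset.univ.filter fun p : V × V =>
    u ≠ p.1 ∧ u ≠ p.2 ∧ p.1 ≠ p.2 ∧ E p.1 u ∧ E p.2 p.1 ∧ E u p.2).card

/-- The number of transitive triads: triples `(a, b, c)` of pairwise distinct nodes with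
edges `(a, b)`, `(b, c)`, and `(a, c)`. -/
def transitiveTriadCount (V : Type*) [Fintype V] [DecidableEq V]
    (E : V → V → Prop) [DecidableRel E] : ℕ :=
  ((Finset.univ : Finset (V × V × V)).filter fun t =>
    t.1 ≠ t.2.1 ∧ t.1 ≠ t.2.2 ∧ t.2.1 ≠ t.2.2 ∧ E t.1 t.2.1 ∧ E t.2.1 t.2.2 ∧ E t.1 t.2.2).card

/-- The number of cyclically ordered directed 3-cycles: triples `(a, b, c)` of pairwise
distinct nodes with edges `(a, b)`, `(b, c)`, and `(c, a)`. -/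
def cyclicTriangleCount (V : Type*) [Fintype V] [DecidableEq V]
    (E : V → V → Prop) [DecidableRel E] : ℕ :=
  ((Finset.univ : Finset (V × V × V)).filter fun t =>
    t.1 ≠ t.2.1 ∧ t.1 ≠ t.2.2 ∧ t.2.1 ≠ t.2.2 ∧ E t.1 t.2.1 ∧ E t.2.1 t.2.2 ∧ E t.2.2 t.1).card


private lemma sum_card_filter_eq {V : Type*} [Fintype V] [DecidableEq V]
    (P : V → V × V → Prop) [∀ u p, Decidable (P u p)] :
    (∑ u : V, (Finset.univ.filter (P u)).card) =
    ((Finset.univ : Finset (V × V × V)).filter (fun t => P t.1 t.2)).card := by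
  rw [Finset.card_filter, Fintype.sum_prod_type]
  simp only [Finset.card_filter]

/-- In a finite simple directed graph with no reciprocated edges and with
`Σ_v d_in(v)·d_out(v) > 0`, the global directed closure coefficients of type ii satisfy
`H_ii^i = T / (Σ_v d_in(v)·d_out(v))` and `H_ii^o = C₃ / (Σ_v d_in(v)·d_out(v))`,
where `T` is the number of transitive triads and `C₃` the number of cyclically ordered
directed 3-cycles. -/
theorem global_ii_closure_coefficients_formula {V : Type*} [Fintype V] [DecidableEq V]
    (E : V → V → Prop) [DecidableRel E] (hirr : ∀ v, ¬ E v v)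
    (hnr : ∀ a b, E a b → ¬ E b a)
    (hpos : 0 < ∑ v : V, inDeg E v * outDeg E v) :
    (∑ u : V, wedgeIIi E u : ℚ) / (∑ u : V, wedgeII E u) =
      (transitiveTriadCount V E : ℚ) / (∑ v : V, inDeg E v * outDeg E v) ∧
    (∑ u : V, wedgeIIo E u : ℚ) / (∑ u : V, wedgeII E u) =
      (cyclicTriangleCount V E : ℚ) / (∑ v : V, inDeg E v * outDeg E v) := by
  
  classical
  -- denominator
  have hden : (∑ u : V, wedgeII E u) = ∑ v : V, inDeg E v * outDeg E v := by
    have h1 : ∀ u : V, wedgeII E u =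
        (Finset.univ.filter fun p : V × V => E p.1 u ∧ E p.2 p.1).card := by
      intro u
      unfold wedgeII
      congr 1
      apply Finset.filter_congr
      intro p _
      constructor
      · rintro ⟨-, -, -, h4, h5⟩; exact ⟨h4, h5⟩
      · rintro ⟨h4, h5⟩
        refine ⟨fun he => hirr u (he ▸ h4), fun he => hnr p.1 u h4 (he ▸ h5),
          fun he => hirr p.2 (he ▸ h5), h4, h5⟩
    calc ∑ u : V, wedgeII E u
        = ((Finset.univ : Finset (V × V × V)).filter
            (fun t => E t.2.1 t.1 ∧ E t.2.2 t.2.1)).card := by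
          simp only [h1]; exact sum_card_filter_eq (fun u p => E p.1 u ∧ E p.2 p.1)
      _ = ((Finset.univ : Finset (V × V × V)).filter
            (fun t => E t.1 t.2.1 ∧ E t.2.2 t.1)).card := by
          apply Finset.card_nbij' (fun t => (t.2.1, t.1, t.2.2)) (fun t => (t.2.1, t.1, t.2.2))
          · intro t ht; simp_all
          · intro t ht; simp_all
          · intro t _; rfl
          · intro t _; rfl
      _ = ∑ v : V, ((Finset.univ.filter
            (fun p : V × V => E v p.1 ∧ E p.2 v)).card) := (sum_card_filter_eq (fun v p => E v p.1 ∧ E p.2 v)).symm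
      _ = ∑ v : V, inDeg E v * outDeg E v := by
          apply Finset.sum_congr rfl
          intro v _
          rw [inDeg, outDeg, mul_comm]
          rw [← Finset.univ_product_univ, Finset.filter_product (fun w => E v w) (fun w => E w v), Finset.card_product]
  have hT : (∑ u : V, wedgeIIi E u) = transitiveTriadCount V E := by
    have h1 : ∀ u : V, wedgeIIi E u =
        (Finset.univ.filter fun p : V × V => E p.1 u ∧ E p.2 p.1 ∧ E p.2 u).card := by
      intro u
      unfold wedgeIIi
      congr 1
      apply Finset.filter_congr
      intro p _
      constructor
      · rintro ⟨-, -, -, h4, h5, h6⟩; exact ⟨h4, h5, h6⟩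
      · rintro ⟨h4, h5, h6⟩
        refine ⟨fun he => hirr u (he ▸ h4), fun he => hirr u (he ▸ h6),
          fun he => hirr p.2 (he ▸ h5), h4, h5, h6⟩
    have h2 : transitiveTriadCount V E =
        ((Finset.univ : Finset (V × V × V)).filter
          (fun t => E t.1 t.2.1 ∧ E t.2.1 t.2.2 ∧ E t.1 t.2.2)).card := by
      unfold transitiveTriadCount
      congr 1
      apply Finset.filter_congr
      intro t _
      constructor
      · rintro ⟨-, -, -, h4, h5, h6⟩; exact ⟨h4, h5, h6⟩
      · rintro ⟨h4, h5, h6⟩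
        refine ⟨fun he => hirr t.1 (he ▸ h4), fun he => hirr t.1 (he ▸ h6),
          fun he => hirr t.2.1 (he ▸ h5), h4, h5, h6⟩
    rw [h2]
    calc ∑ u : V, wedgeIIi E u
        = ((Finset.univ : Finset (V × V × V)).filter
            (fun t => E t.2.1 t.1 ∧ E t.2.2 t.2.1 ∧ E t.2.2 t.1)).card := by
          simp only [h1]; exact sum_card_filter_eq (fun u p => E p.1 u ∧ E p.2 p.1 ∧ E p.2 u)
      _ = ((Finset.univ : Finset (V × V × V)).filter
            (fun t => E t.1 t.2.1 ∧ E t.2.1 t.2.2 ∧ E t.1 t.2.2)).card := by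
          apply Finset.card_nbij' (fun t => (t.2.2, t.2.1, t.1)) (fun t => (t.2.2, t.2.1, t.1))
          · intro t ht; simp_all
          · intro t ht; simp_all
          · intro t _; rfl
          · intro t _; rfl
  have hC : (∑ u : V, wedgeIIo E u) = cyclicTriangleCount V E := by
    have h1 : ∀ u : V, wedgeIIo E u =
        (Finset.univ.filter fun p : V × V => E p.1 u ∧ E p.2 p.1 ∧ E u p.2).card := by
      intro u
      unfold wedgeIIo
      congr 1
      apply Finset.filter_congr
      intro p _
      constructor
      · rintro ⟨-, -, -, h4, h5, h6⟩; exact ⟨h4, h5, h6⟩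
      · rintro ⟨h4, h5, h6⟩
        refine ⟨fun he => hirr u (he ▸ h4), fun he => hirr u (he ▸ h6),
          fun he => hirr p.2 (he ▸ h5), h4, h5, h6⟩
    have h2 : cyclicTriangleCount V E =
        ((Finset.univ : Finset (V × V × V)).filter
          (fun t => E t.1 t.2.1 ∧ E t.2.1 t.2.2 ∧ E t.2.2 t.1)).card := by
      unfold cyclicTriangleCount
      congr 1
      apply Finset.filter_congr
      intro t _
      constructor
      · rintro ⟨-, -, -, h4, h5, h6⟩; exact ⟨h4, h5, h6⟩
      · rintro ⟨h4, h5, h6⟩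
        refine ⟨fun he => hirr t.1 (he ▸ h4), fun he => hirr t.2.2 (he ▸ h6),
          fun he => hirr t.2.1 (he ▸ h5), h4, h5, h6⟩
    rw [h2]
    calc ∑ u : V, wedgeIIo E u
        = ((Finset.univ : Finset (V × V × V)).filter
            (fun t => E t.2.1 t.1 ∧ E t.2.2 t.2.1 ∧ E t.1 t.2.2)).card := by
          simp only [h1]; exact sum_card_filter_eq (fun u p => E p.1 u ∧ E p.2 p.1 ∧ E u p.2)
      _ = ((Finset.univ : Finset (V × V × V)).filter
            (fun t => E t.1 t.2.1 ∧ E t.2.1 t.2.2 ∧ E t.2.2 t.1)).card := by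
          apply Finset.card_nbij' (fun t => (t.2.1, t.1, t.2.2)) (fun t => (t.2.1, t.1, t.2.2))
          · intro t ht; simp_all
          · intro t ht; simp_all
          · intro t _; rfl
          · intro t _; rfl
  exact ⟨by rw [← Nat.cast_sum, hT, hden], by rw [← Nat.cast_sum, hC, hden]⟩
end
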